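/- arXiv:2001.00488 — 2 statements merged into one kernel-verified Lean document; each statement's English description precedes it below -/
import Mathlib

section
/- Let g be a Carnot Lie algebra of step n with dual g* = ⊕_{i=1}^n g_i*. Define ḡ = (⊕_{i=1}^n (g_i ⊕ g*_{n-i+1})) ⊕ ℝZ with bracket: [Z, x] = 0 for all x; [x,y]_ḡ = [x,y]_g for x, y ∈ g; [x,y]_ḡ = 0 for x, y ∈ g*; [x,y]_ḡ = 0 for x ∈ g_i*, y ∈ g_j with i < j; [x,y]_ḡ = j⟨x,y⟩Z for x ∈ g_j*, y ∈ g_j; and ⟨[x,y]_ḡ, z⟩ = ⟨x, [y,z]_g⟩ for x ∈ g_i*, y ∈ g_j, z ∈ g_{i-j} with i > j (where [x,y]_ḡ ∈ g*_{i-j}), with [y,x] := −[x,y]. Then this bracket satisfies the Jacobi identity, so ḡ is a Lie algebra. -/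
/-! The bracket of `ḡ` is `[(x,ξ,s),(y,η,u)] = ([x,y], ξ ∘ ad y - η ∘ ad x, ξ(Dy) - η(Dx))`, where
`D = ∑ j • p_j` is the grading derivation of `g`, acting by `j` on `g_j`. The first two components
form the semidirect product of `g` with its coadjoint representation, which is a Lie algebra.
The last one is the 2-form `ω((x,ξ),(y,η)) = ξ(Dy) - η(Dx)`, and its cocycle identity is exactly
the Leibniz rule for `D`, which holds because the grading is compatible with the bracket. -/

open LieAlgebra

section GradingDerivation

variable {R L : Type*} [CommRing R] [LieRing L] [LieAlgebra R L]

theorem sum_smul_proj_apply_of_mem (G : ℕ → Submodule R L) (p : ℕ → L →ₗ[R] L)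
    (hp : ∀ i j, ∀ x ∈ G j, p i x = if i = j then x else 0)
    (s : Finset ℕ) (hs : ∀ a ∉ s, G a = ⊥) {a : ℕ} {y : L} (hy : y ∈ G a) :
    (∑ j ∈ s, (j : R) • p j) y = (a : R) • y := by
  by_cases ha : a ∈ s
  · rw [LinearMap.sum_apply, Finset.sum_eq_single_of_mem a ha]
    · simp [hp a a y hy]
    · intro j _ hja
      simp [hp j a y hy, hja]
  · have hy0 : y = 0 := by simpa [hs a ha] using hy
    simp [hy0]

theorem LieDerivation.ofGrading_natCast_eq_sum_smul_proj (G : ℕ → Submodule R L)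
    [GradedLieAlgebra G] (p : ℕ → L →ₗ[R] L)
    (hp : ∀ i j, ∀ x ∈ G j, p i x = if i = j then x else 0)
    (s : Finset ℕ) (hs : ∀ a ∉ s, G a = ⊥) :
    (LieDerivation.ofGrading G (Nat.castAddMonoidHom R) : L →ₗ[R] L) = ∑ j ∈ s, (j : R) • p j := by
  have hspan : Submodule.span R (⋃ i, (G i : Set L)) = ⊤ := by
    rw [← Submodule.iSup_eq_span, (DirectSum.Decomposition.isInternal G).submodule_iSup_eq_top]
  refine LinearMap.ext_on hspan fun y hy => ?_
  obtain ⟨a, hya⟩ := Set.mem_iUnion.mp hy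
  rw [LieDerivation.coeFn_coe, LieDerivation.ofGrading_apply_apply G _ hya,
    sum_smul_proj_apply_of_mem G p hp s hs hya, Nat.coe_castAddMonoidHom]

end GradingDerivation

section Gbar

variable {R L : Type*} [CommRing R] [LieRing L] [LieAlgebra R L]

def gbarBracket (D : L →ₗ[R] L) (a b : L × Module.Dual R L × R) : L × Module.Dual R L × R :=
  (⁅a.1, b.1⁆, a.2.1 ∘ₗ ad R L b.1 - b.2.1 ∘ₗ ad R L a.1, a.2.1 (D b.1) - b.2.1 (D a.1))

theorem gbarBracket_anticomm (D : L →ₗ[R] L) (a b : L × Module.Dual R L × R) :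
    gbarBracket D a b = -gbarBracket D b a := by
  simp only [gbarBracket, Prod.neg_mk, neg_sub, ← lie_skew b.1, neg_neg]

theorem gbarBracket_jacobi (D : LieDerivation R L L) (a b c : L × Module.Dual R L × R) :
    gbarBracket D a (gbarBracket D b c) + gbarBracket D b (gbarBracket D c a) +
      gbarBracket D c (gbarBracket D a b) = 0 := by
  obtain ⟨x, ξ, _⟩ := a
  obtain ⟨y, η, _⟩ := b
  obtain ⟨z, ζ, _⟩ := c
  simp only [gbarBracket, Prod.mk_add_mk, Prod.mk_eq_zero]
  refine ⟨by simpa using lie_jacobi x y z, ?_, ?_⟩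
  · ext w
    simp only [LinearMap.add_apply, LinearMap.sub_apply, LinearMap.comp_apply, ad_apply,
      LinearMap.zero_apply, lie_lie, map_sub]
    abel
  · simp only [LinearMap.sub_apply, LinearMap.comp_apply, ad_apply, LieDerivation.coeFn_coe,
      LieDerivation.apply_lie_eq_add, map_add, ← lie_skew (D _) (_ : L), map_neg]
    ring

end Gbar

theorem gbar_jacobi_general
    (L : Type*) [LieRing L] [LieAlgebra ℝ L] (n : ℕ)
    (G : ℕ → Submodule ℝ L)
    (hinternal : DirectSum.IsInternal G)
    (hGtop : ∀ k, n < k → G k = ⊥)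
    (hbrk : ∀ i j, ∀ x ∈ G i, ∀ y ∈ G j, ⁅x, y⁆ ∈ G (i + j))
    -- the graded projections `p i : g → g_i`
    (p : ℕ → L →ₗ[ℝ] L)
    (hp : ∀ i j, ∀ x ∈ G j, p i x = if i = j then x else 0)
    -- the bracket of `ḡ = g × g* × ℝZ`
    (B : (L × Module.Dual ℝ L × ℝ) → (L × Module.Dual ℝ L × ℝ) → (L × Module.Dual ℝ L × ℝ))
    (hB : ∀ (x y : L) (ξ η : Module.Dual ℝ L) (s u : ℝ),
      B (x, ξ, s) (y, η, u) =
        (⁅x, y⁆,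
         ξ.comp (LieAlgebra.ad ℝ L y) - η.comp (LieAlgebra.ad ℝ L x),
         ∑ j ∈ Finset.range (n + 1), (j : ℝ) * (ξ (p j y) - η (p j x)))) :
    (∀ a b, B a b = - B b a) ∧
    (∀ a b c, B a (B b c) + B b (B c a) + B c (B a b) = 0) := by
  let : GradedLieAlgebra G :=
    { hinternal.chooseDecomposition with bracket_mem := fun _ _ _ _ hx hy => hbrk _ _ _ hx _ hy }
  let δ := LieDerivation.ofGrading G (Nat.castAddMonoidHom ℝ)
  have hδ : (δ : L →ₗ[ℝ] L) = ∑ j ∈ Finset.range (n + 1), (j : ℝ) • p j :=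
    LieDerivation.ofGrading_natCast_eq_sum_smul_proj G p hp _
      fun k hk => hGtop k (by simpa using hk)
  have hBδ : B = gbarBracket δ := by
    funext ⟨x, ξ, s⟩ ⟨y, η, u⟩
    simp only [hB, gbarBracket, hδ, mul_sub, Finset.sum_sub_distrib, LinearMap.sum_apply,
      LinearMap.smul_apply, map_sum, map_smul, smul_eq_mul]
  subst hBδ
  exact ⟨gbarBracket_anticomm _, gbarBracket_jacobi δ⟩

/-- The bracket on `ḡ = g ⊕ g* ⊕ ℝZ` built from a Carnot Lie algebra `g` of step `n`
(bracket of `g` on `g`; zero bracket on `g*` and on `Z`; `[ξ, y] = ξ ∘ ad(y)` in `g*`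
together with the `Z`-component `∑_j j·⟨ξ_j, y_j⟩`, extending the defining formulas
`⟨[ξ,y],z⟩ = ⟨ξ,[y,z]⟩` for `ξ ∈ g_i*, y ∈ g_j, z ∈ g_{i-j}` and
`[ξ,y] = j⟨ξ,y⟩Z` for `ξ ∈ g_j*, y ∈ g_j`) is antisymmetric and satisfies the
Jacobi identity, hence `ḡ` is a Lie algebra. -/
theorem gbar_jacobi
    (L : Type*) [LieRing L] [LieAlgebra ℝ L] (n : ℕ)
    (G : ℕ → Submodule ℝ L)
    (hinternal : DirectSum.IsInternal G)
    (hG0 : G 0 = ⊥)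
    (hGtop : ∀ k, n < k → G k = ⊥)
    (hbrk : ∀ i j, ∀ x ∈ G i, ∀ y ∈ G j, ⁅x, y⁆ ∈ G (i + j))
    -- the graded projections `p i : g → g_i`
    (p : ℕ → L →ₗ[ℝ] L)
    (hp : ∀ i j, ∀ x ∈ G j, p i x = if i = j then x else 0)
    -- the bracket of `ḡ = g × g* × ℝZ`
    (B : (L × Module.Dual ℝ L × ℝ) → (L × Module.Dual ℝ L × ℝ) → (L × Module.Dual ℝ L × ℝ))
    (hB : ∀ (x y : L) (ξ η : Module.Dual ℝ L) (s u : ℝ),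
      B (x, ξ, s) (y, η, u) =
        (⁅x, y⁆,
         ξ.comp (LieAlgebra.ad ℝ L y) - η.comp (LieAlgebra.ad ℝ L x),
         ∑ j ∈ Finset.range (n + 1), (j : ℝ) * (ξ (p j y) - η (p j x)))) :
    (∀ a b, B a b = - B b a) ∧
    (∀ a b c, B a (B b c) + B b (B c a) + B c (B a b) = 0) :=
  gbar_jacobi_general L n G hinternal hGtop hbrk p hp B hB
end

section
/- With ḡ constructed as above from a Carnot Lie algebra g of step n, the grading ḡ_i = g_i ⊕ g*_{n-i+1} (for 1 ≤ i ≤ n) and ḡ_{n+1} = ℝZ satisfies [ḡ_i, ḡ_j] ⊆ ḡ_{i+j}, so ḡ is a Carnot Lie algebra of step n+1. -/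
/-!
If `ξ ∈ g*_d` and `y ∈ g_j`, then `ξ ∘ ad y` kills every `g_m`
with `j + m ≠ d`, because `ad y` raises degrees by `j`. For `a ∈ ḡ_i`, `b ∈ ḡ_j` with `1 ≤ i, j ≤ n`
the dual parts lie in `g*_{n+1-i}` and `g*_{n+1-j}`, so the `g*`-component of `[a, b]` lies in
`g*_{n+1-(i+j)}`; when `i + j ≥ n + 1` it kills every `g_m` (using `g_0 = 0`), hence all of
`g = ⨁ g_m`, and vanishes. The `Z`-component pairs `g*_{n+1-i}` with `g_j`, so it is zero unless
`i + j = n + 1`. The remaining degrees are handled by the centrality of `Z`.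
-/

section

open LieAlgebra

variable {R L : Type*} [CommRing R] [LieRing L] [LieAlgebra R L]

theorem Module.Dual.eq_zero_of_forall_mem {ι : Type*} {G : ι → Submodule R L}
    (hG : ⨆ m, G m = ⊤) {f : Module.Dual R L} (hf : ∀ m, ∀ z ∈ G m, f z = 0) : f = 0 := by
  rw [← LinearMap.ker_eq_top, eq_top_iff, ← hG]
  exact iSup_le fun m z hz => hf m z hz

/-- `ξ` lies in the graded piece `g*_d` of the dual. -/
def AnnihilatesOff (G : ℕ → Submodule R L) (d : ℕ) (ξ : Module.Dual R L) : Prop :=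
  ∀ m, m ≠ d → ∀ z ∈ G m, ξ z = 0

/-- The bracket of `ḡ = g × g* × RZ`. -/
def dualExtBracket (n : ℕ) (p : ℕ → L →ₗ[R] L) (a b : L × Module.Dual R L × R) :
    L × Module.Dual R L × R :=
  (⁅a.1, b.1⁆, a.2.1.comp (ad R L b.1) - b.2.1.comp (ad R L a.1),
    ∑ j ∈ Finset.range (n + 1), (j : R) * (a.2.1 (p j b.1) - b.2.1 (p j a.1)))

theorem dualExtBracket_eq_zero_of_central (n : ℕ) (p : ℕ → L →ₗ[R] L)
    {a b : L × Module.Dual R L × R} (h : a.1 = 0 ∧ a.2.1 = 0 ∨ b.1 = 0 ∧ b.2.1 = 0) :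
    dualExtBracket n p a b = 0 := by
  obtain ⟨x, ξ, s⟩ := a
  obtain ⟨y, η, u⟩ := b
  rcases h with ⟨rfl, rfl⟩ | ⟨rfl, rfl⟩ <;> simp [dualExtBracket, Prod.ext_iff]

theorem dualExtBracket_snd_snd_eq_zero {G : ℕ → Submodule R L} {n : ℕ} {p : ℕ → L →ₗ[R] L}
    (hp : ∀ i j, ∀ x ∈ G j, p i x = if i = j then x else 0) {i j : ℕ} {x y : L}
    {ξ η : Module.Dual R L} (hx : x ∈ G i) (hy : y ∈ G j) (hξy : ξ y = 0) (hηx : η x = 0)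
    (s u : R) : (dualExtBracket n p (x, ξ, s) (y, η, u)).2.2 = 0 := by
  simp only [dualExtBracket]
  refine Finset.sum_eq_zero fun k _ => ?_
  rw [hp k j y hy, hp k i x hx]
  split_ifs <;> simp [hξy, hηx]

section Graded

variable {G : ℕ → Submodule R L} (hG : ∀ i j, ∀ x ∈ G i, ∀ y ∈ G j, ⁅x, y⁆ ∈ G (i + j))
include hG

theorem AnnihilatesOff.apply_lie {d j m : ℕ} {ξ : Module.Dual R L} (hξ : AnnihilatesOff G d ξ)
    {y z : L} (hy : y ∈ G j) (hz : z ∈ G m) (hjm : j + m ≠ d) : ξ ⁅y, z⁆ = 0 :=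
  hξ (j + m) hjm _ (hG j m y hy z hz)

theorem coadjoint_sub_apply_eq_zero {N i j d₁ d₂ m : ℕ} (hd₁ : d₁ + i = N) (hd₂ : d₂ + j = N)
    {x y z : L} {ξ η : Module.Dual R L} (hx : x ∈ G i) (hy : y ∈ G j)
    (hξ : AnnihilatesOff G d₁ ξ) (hη : AnnihilatesOff G d₂ η) (hz : z ∈ G m)
    (hm : i + j + m ≠ N) : (ξ.comp (ad R L y) - η.comp (ad R L x)) z = 0 := by
  simp only [LinearMap.sub_apply, LinearMap.comp_apply, ad_apply]
  rw [hξ.apply_lie hG hy hz (by omega), hη.apply_lie hG hx hz (by omega), sub_zero]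

theorem coadjoint_sub_eq_zero (hG0 : G 0 = ⊥) (hspan : ⨆ m, G m = ⊤) {N i j d₁ d₂ : ℕ}
    (hd₁ : d₁ + i = N) (hd₂ : d₂ + j = N) (hN : N ≤ i + j) {x y : L} {ξ η : Module.Dual R L}
    (hx : x ∈ G i) (hy : y ∈ G j) (hξ : AnnihilatesOff G d₁ ξ) (hη : AnnihilatesOff G d₂ η) :
    ξ.comp (ad R L y) - η.comp (ad R L x) = 0 := by
  refine Module.Dual.eq_zero_of_forall_mem hspan fun m z hz => ?_
  rcases Nat.eq_zero_or_pos m with rfl | hm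
  · rw [hG0, Submodule.mem_bot] at hz
    rw [hz, map_zero]
  · exact coadjoint_sub_apply_eq_zero hG hd₁ hd₂ hx hy hξ hη hz (by omega)

variable {n i j : ℕ} {x y : L} {ξ η : Module.Dual R L} (hx : x ∈ G i) (hy : y ∈ G j)
  (hξ : AnnihilatesOff G (n - i + 1) ξ) (hη : AnnihilatesOff G (n - j + 1) η)
include hx hy hξ hη

theorem dualExtBracket_mem_of_add_le {p : ℕ → L →ₗ[R] L}
    (hp : ∀ i j, ∀ x ∈ G j, p i x = if i = j then x else 0) (hij : i + j ≤ n) :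
    let c := dualExtBracket n p (x, ξ, 0) (y, η, 0)
    c.1 ∈ G (i + j) ∧ AnnihilatesOff G (n - (i + j) + 1) c.2.1 ∧ c.2.2 = 0 :=
  ⟨hG i j x hx y hy,
    fun _ hm _ hz => coadjoint_sub_apply_eq_zero hG (N := n + 1) (by omega) (by omega)
      hx hy hξ hη hz (by omega),
    dualExtBracket_snd_snd_eq_zero hp hx hy (hξ j (by omega) y hy) (hη i (by omega) x hx) 0 0⟩

theorem dualExtBracket_fst_eq_zero_and_snd_fst_eq_zero (hG0 : G 0 = ⊥)
    (hGtop : ∀ k, n < k → G k = ⊥) (hspan : ⨆ m, G m = ⊤) (hi : i ≤ n) (hj : j ≤ n)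
    (hij : n + 1 ≤ i + j) (p : ℕ → L →ₗ[R] L) (s u : R) :
    let c := dualExtBracket n p (x, ξ, s) (y, η, u)
    c.1 = 0 ∧ c.2.1 = 0 := by
  refine ⟨?_, coadjoint_sub_eq_zero hG hG0 hspan (by omega) (by omega) hij hx hy hξ hη⟩
  simpa [dualExtBracket, hGtop _ hij] using hG i j x hx y hy

theorem dualExtBracket_eq_zero_of_lt_add (hG0 : G 0 = ⊥) (hGtop : ∀ k, n < k → G k = ⊥)
    (hspan : ⨆ m, G m = ⊤) (hi : i ≤ n) (hj : j ≤ n) (hij : n + 1 < i + j) {p : ℕ → L →ₗ[R] L}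
    (hp : ∀ i j, ∀ x ∈ G j, p i x = if i = j then x else 0) :
    dualExtBracket n p (x, ξ, 0) (y, η, 0) = 0 :=
  have ⟨hlie, hdual⟩ := dualExtBracket_fst_eq_zero_and_snd_fst_eq_zero hG hx hy hξ hη hG0 hGtop
    hspan hi hj hij.le p 0 0
  Prod.ext hlie (Prod.ext hdual
    (dualExtBracket_snd_snd_eq_zero hp hx hy (hξ j (by omega) y hy) (hη i (by omega) x hx) 0 0))

end Graded

theorem fst_eq_zero_and_snd_fst_eq_zero_of_mem {M N P : Type*} [AddCommMonoid M]
    [AddCommMonoid N] [AddCommMonoid P] [Module R M] [Module R N] [Module R P] {n : ℕ}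
    {V : ℕ → Submodule R (M × N × P)} (h0 : V 0 = ⊥)
    (htop : ∀ x ξ s, (x, ξ, s) ∈ V (n + 1) ↔ x = 0 ∧ ξ = 0)
    (hbig : ∀ k, n + 1 < k → V k = ⊥) {k : ℕ} (hk : ¬(1 ≤ k ∧ k ≤ n)) {a : M × N × P}
    (ha : a ∈ V k) : a.1 = 0 ∧ a.2.1 = 0 := by
  by_cases hk1 : k = n + 1
  · exact (htop a.1 a.2.1 a.2.2).mp (hk1 ▸ ha)
  have hbot : V k = ⊥ := by
    rcases Nat.eq_zero_or_pos k with rfl | hk0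
    · exact h0
    · exact hbig k (by omega)
  rw [hbot, Submodule.mem_bot] at ha
  simp [ha]

end

/-- The grading `ḡ_i = g_i ⊕ g*_{n-i+1}` (for `1 ≤ i ≤ n`) and `ḡ_{n+1} = ℝZ` on the
extension `ḡ = g ⊕ g* ⊕ ℝZ` of a Carnot Lie algebra `g` of step `n` satisfies
`[ḡ_i, ḡ_j] ⊆ ḡ_{i+j}`, so `ḡ` is a Carnot Lie algebra of step `n+1`. -/
theorem gbar_carnot_grading
    (L : Type*) [LieRing L] [LieAlgebra ℝ L] (n : ℕ)
    (G : ℕ → Submodule ℝ L)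
    (hinternal : DirectSum.IsInternal G)
    (hG0 : G 0 = ⊥)
    (hGtop : ∀ k, n < k → G k = ⊥)
    (hbrk : ∀ i j, ∀ x ∈ G i, ∀ y ∈ G j, ⁅x, y⁆ ∈ G (i + j))
    -- the graded projections `p i : g → g_i`
    (p : ℕ → L →ₗ[ℝ] L)
    (hp : ∀ i j, ∀ x ∈ G j, p i x = if i = j then x else 0)
    -- the bracket of `ḡ = g × g* × ℝZ`
    (B : (L × Module.Dual ℝ L × ℝ) → (L × Module.Dual ℝ L × ℝ) → (L × Module.Dual ℝ L × ℝ))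
    (hB : ∀ (x y : L) (ξ η : Module.Dual ℝ L) (s u : ℝ),
      B (x, ξ, s) (y, η, u) =
        (⁅x, y⁆,
         ξ.comp (LieAlgebra.ad ℝ L y) - η.comp (LieAlgebra.ad ℝ L x),
         ∑ j ∈ Finset.range (n + 1), (j : ℝ) * (ξ (p j y) - η (p j x))))
    -- the grading of `ḡ`
    (Gbar : ℕ → Submodule ℝ (L × Module.Dual ℝ L × ℝ))
    (hGbar0 : Gbar 0 = ⊥)
    (hGbarMid : ∀ i, 1 ≤ i → i ≤ n → ∀ (x : L) (ξ : Module.Dual ℝ L) (s : ℝ),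
      (x, ξ, s) ∈ Gbar i ↔
        x ∈ G i ∧ (∀ m, m ≠ n - i + 1 → ∀ z ∈ G m, ξ z = 0) ∧ s = 0)
    (hGbarTop : ∀ (x : L) (ξ : Module.Dual ℝ L) (s : ℝ),
      (x, ξ, s) ∈ Gbar (n + 1) ↔ x = 0 ∧ ξ = 0)
    (hGbarBig : ∀ k, n + 1 < k → Gbar k = ⊥) :
    ∀ i j, ∀ a ∈ Gbar i, ∀ b ∈ Gbar j, B a b ∈ Gbar (i + j) := by
  have hB' : B = dualExtBracket n p :=
    funext fun ⟨x, ξ, s⟩ => funext fun ⟨y, η, u⟩ => hB x y ξ η s u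
  subst hB'
  rintro i j a ha b hb
  by_cases hij : (1 ≤ i ∧ i ≤ n) ∧ (1 ≤ j ∧ j ≤ n)
  swap
  · rw [dualExtBracket_eq_zero_of_central n p (not_and_or.mp hij |>.imp
      (fst_eq_zero_and_snd_fst_eq_zero_of_mem hGbar0 hGbarTop hGbarBig · ha)
      (fst_eq_zero_and_snd_fst_eq_zero_of_mem hGbar0 hGbarTop hGbarBig · hb))]
    exact zero_mem _
  obtain ⟨x, ξ, s⟩ := a
  obtain ⟨y, η, u⟩ := b
  obtain ⟨hi, hj⟩ := hij
  obtain ⟨hx, hξ, rfl⟩ := (hGbarMid i hi.1 hi.2 x ξ s).mp ha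
  obtain ⟨hy, hη, rfl⟩ := (hGbarMid j hj.1 hj.2 y η u).mp hb
  have hspan := hinternal.submodule_iSup_eq_top
  rcases lt_trichotomy (i + j) (n + 1) with hlt | heq | hgt
  · obtain ⟨hlie, hdual, hcenter⟩ := dualExtBracket_mem_of_add_le hbrk hx hy hξ hη hp (by omega)
    exact (hGbarMid (i + j) (by omega) (by omega) _ _ _).mpr ⟨hlie, hdual, hcenter⟩
  · rw [heq]
    exact (hGbarTop _ _ _).mpr <| dualExtBracket_fst_eq_zero_and_snd_fst_eq_zero hbrk hx hy hξ hη
      hG0 hGtop hspan hi.2 hj.2 heq.ge p 0 0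
  · rw [hGbarBig _ hgt, Submodule.mem_bot]
    exact dualExtBracket_eq_zero_of_lt_add hbrk hx hy hξ hη hG0 hGtop hspan hi.2 hj.2 hgt hp
end
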